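/- arXiv:1211.5369 — 4 statements merged into one kernel-verified Lean document; each statement's English description precedes it below -/
import Mathlib

section
/- For a, b > -1 with a + b > -1 and nonnegative integers i, j, the bimoment I_{ij} = ∫∫_{(0,∞)²} x^i y^j x^a y^b e^{-(x+y)}/(x+y) dx dy satisfies I_{ij} = Γ(a+i+1) · M_{ij} · Γ(b+j+1), where M_{ij} = ∫₀¹ x^{i+j+a+b} dx = 1/(i+j+a+b+1) is the Hankel moment matrix of the weight x^{a+b} on [0,1]. -/
/-!
Writing `e^{-u} / u = ∫_1^∞ e^{-s u} ds`, Tonelli turns the bimoment with exponents `α - 1`, `β - 1`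
into `∫_1^∞ (Γ(α) s^{-α}) (Γ(β) s^{-β}) ds`, and `∫_1^∞ s^{-(α+β)} ds = 1 / (α + β - 1)`.
-/

open MeasureTheory Set intervalIntegral

open scoped ENNReal

section

variable {α β γ : Type*} [MeasurableSpace α] [MeasurableSpace β] [MeasurableSpace γ]
  {μ : Measure α} {ν : Measure β} {ρ : Measure γ}

theorem ofReal_integral_eq_lintegral_ofReal_of_integral_ne_zero {f : α → ℝ}
    (hf : 0 ≤ᵐ[μ] f) (h : ∫ x, f x ∂μ ≠ 0) :
    ENNReal.ofReal (∫ x, f x ∂μ) = ∫⁻ x, ENNReal.ofReal (f x) ∂μ :=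
  ofReal_integral_eq_lintegral_ofReal (.of_integral_ne_zero h) hf

theorem integral_integral_eq_toReal_lintegral_lintegral [SFinite μ] [SFinite ν] {f : α → β → ℝ}
    (hf : AEStronglyMeasurable (fun p : α × β => f p.1 p.2) (μ.prod ν))
    (h0 : ∀ᵐ p ∂μ.prod ν, 0 ≤ f p.1 p.2)
    (hfin : ∫⁻ x, ∫⁻ y, ENNReal.ofReal (f x y) ∂ν ∂μ ≠ ∞) :
    ∫ x, ∫ y, f x y ∂ν ∂μ = (∫⁻ x, ∫⁻ y, ENNReal.ofReal (f x y) ∂ν ∂μ).toReal := by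
  have hmeas : AEMeasurable (fun p : α × β => ENNReal.ofReal (f p.1 p.2)) (μ.prod ν) :=
    hf.aemeasurable.ennreal_ofReal
  have hint : Integrable (fun p : α × β => f p.1 p.2) (μ.prod ν) :=
    ⟨hf, (hasFiniteIntegral_iff_ofReal h0).2 <| by
      rw [lintegral_prod _ hmeas]; exact hfin.lt_top⟩
  rw [← integral_prod _ hint, integral_eq_lintegral_of_nonneg_ae h0 hf, lintegral_prod _ hmeas]

theorem lintegral_lintegral_lintegral_mul_swap [SFinite μ] [SFinite ν] [SFinite ρ]
    {F : γ → α → ℝ≥0∞} {G : γ → β → ℝ≥0∞}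
    (hF : Measurable fun p : γ × α => F p.1 p.2) (hG : Measurable fun p : γ × β => G p.1 p.2) :
    ∫⁻ x, ∫⁻ y, ∫⁻ s, F s x * G s y ∂ρ ∂ν ∂μ
      = ∫⁻ s, (∫⁻ x, F s x ∂μ) * ∫⁻ y, G s y ∂ν ∂ρ := by
  have hH : Measurable fun q : γ × α × β => F q.1 q.2.1 * G q.1 q.2.2 :=
    (hF.comp (measurable_fst.prodMk measurable_snd.fst)).mul
      (hG.comp (measurable_fst.prodMk measurable_snd.snd))
  calc ∫⁻ x, ∫⁻ y, ∫⁻ s, F s x * G s y ∂ρ ∂ν ∂μ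
      = ∫⁻ x, ∫⁻ s, ∫⁻ y, F s x * G s y ∂ν ∂ρ ∂μ := by
        refine lintegral_congr fun x => lintegral_lintegral_swap ?_
        exact (hH.comp (by fun_prop : Measurable fun q : β × γ => (q.2, x, q.1))).aemeasurable
    _ = ∫⁻ s, ∫⁻ x, ∫⁻ y, F s x * G s y ∂ν ∂μ ∂ρ := by
        refine lintegral_lintegral_swap ?_
        have hswap : Measurable fun q : (α × γ) × β => (q.1.2, q.1.1, q.2) := by fun_prop
        exact (hH.comp hswap).lintegral_prod_right'.aemeasurable
    _ = ∫⁻ s, (∫⁻ x, F s x ∂μ) * ∫⁻ y, G s y ∂ν ∂ρ :=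
        lintegral_congr fun s => lintegral_lintegral_mul
          (hF.comp measurable_prodMk_left).aemeasurable
          (hG.comp measurable_prodMk_left).aemeasurable

end

open Real

theorem lintegral_rpow_mul_exp_neg_mul_Ioi {a r : ℝ} (ha : 0 < a) (hr : 0 < r) :
    ∫⁻ t in Ioi 0, ENNReal.ofReal (t ^ (a - 1) * exp (-(r * t)))
      = ENNReal.ofReal ((1 / r) ^ a * Gamma a) := by
  have hpos : 0 < ∫ t in Ioi 0, t ^ (a - 1) * exp (-(r * t)) := by
    rw [integral_rpow_mul_exp_neg_mul_Ioi ha hr]; positivity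
  rw [← integral_rpow_mul_exp_neg_mul_Ioi ha hr]
  refine (ofReal_integral_eq_lintegral_ofReal_of_integral_ne_zero ?_ hpos.ne').symm
  filter_upwards [self_mem_ae_restrict measurableSet_Ioi] with t (ht : 0 < t)
  positivity

theorem ofReal_exp_neg_div_eq_lintegral_Ioi_one {u : ℝ} (hu : 0 < u) :
    ENNReal.ofReal (exp (-u) / u) = ∫⁻ s in Ioi 1, ENNReal.ofReal (exp (-(s * u))) := by
  have h : ∫ s in Ioi 1, exp (-(s * u)) = exp (-u) / u := by
    simp_rw [show ∀ s : ℝ, -(s * u) = -u * s from fun s => by ring]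
    rw [integral_exp_mul_Ioi (neg_lt_zero.2 hu), mul_one, neg_div_neg_eq]
  rw [← h]
  exact ofReal_integral_eq_lintegral_ofReal_of_integral_ne_zero
    (ae_of_all _ fun s => (exp_pos _).le) (by rw [h]; positivity)

theorem lintegral_Ioi_one_ofReal_mul_rpow_neg {c γ : ℝ} (hc : 0 ≤ c) (hγ : 1 < γ) :
    ∫⁻ s in Ioi 1, ENNReal.ofReal (c * s ^ (-γ)) = ENNReal.ofReal (c / (γ - 1)) := by
  have h : ∫ s in Ioi 1, c * s ^ (-γ) = c / (γ - 1) := by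
    rw [MeasureTheory.integral_const_mul, integral_Ioi_rpow_of_lt (by linarith) one_pos, one_rpow,
      neg_add_eq_sub, ← neg_sub, neg_div_neg_eq, mul_one_div]
  rw [← h]
  exact (ofReal_integral_eq_lintegral_ofReal
    ((integrableOn_Ioi_rpow_of_lt (by linarith) one_pos).const_mul c)
    (by filter_upwards [self_mem_ae_restrict measurableSet_Ioi] with s (hs : 1 < s)
        positivity)).symm

section

variable {α β : ℝ}

theorem ofReal_rpow_mul_rpow_mul_exp_neg_div_add_eq_lintegral {x y : ℝ} (hx : 0 < x)
    (hy : 0 < y) :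
    ENNReal.ofReal (x ^ (α - 1) * y ^ (β - 1) * exp (-(x + y)) / (x + y))
      = ∫⁻ s in Ioi 1, ENNReal.ofReal (x ^ (α - 1) * exp (-(s * x)))
          * ENNReal.ofReal (y ^ (β - 1) * exp (-(s * y))) := by
  rw [mul_div_assoc, ENNReal.ofReal_mul (by positivity),
    ofReal_exp_neg_div_eq_lintegral_Ioi_one (by positivity),
    ← lintegral_const_mul' _ _ ENNReal.ofReal_ne_top]
  refine lintegral_congr fun s => ?_
  rw [← ENNReal.ofReal_mul (by positivity), ← ENNReal.ofReal_mul (by positivity),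
    show -(s * (x + y)) = -(s * x) + -(s * y) by ring, exp_add]
  ring_nf

theorem lintegral_lintegral_rpow_mul_rpow_mul_exp_neg_div_add (hα : 0 < α) (hβ : 0 < β)
    (hαβ : 1 < α + β) :
    ∫⁻ x in Ioi 0, ∫⁻ y in Ioi 0,
        ENNReal.ofReal (x ^ (α - 1) * y ^ (β - 1) * exp (-(x + y)) / (x + y))
      = ENNReal.ofReal (Gamma α * Gamma β / (α + β - 1)) := by
  calc _ = ∫⁻ x in Ioi 0, ∫⁻ y in Ioi 0, ∫⁻ s in Ioi 1,
          ENNReal.ofReal (x ^ (α - 1) * exp (-(s * x)))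
            * ENNReal.ofReal (y ^ (β - 1) * exp (-(s * y))) := by
        refine setLIntegral_congr_fun measurableSet_Ioi fun x hx =>
          setLIntegral_congr_fun measurableSet_Ioi fun y hy =>
            ofReal_rpow_mul_rpow_mul_exp_neg_div_add_eq_lintegral hx hy
    _ = ∫⁻ s in Ioi 1, ENNReal.ofReal (Gamma α * Gamma β * s ^ (-(α + β))) := by
        rw [lintegral_lintegral_lintegral_mul_swap (by fun_prop) (by fun_prop)]
        refine setLIntegral_congr_fun measurableSet_Ioi fun s (hs : 1 < s) => ?_
        have hs0 : 0 < s := one_pos.trans hs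
        rw [lintegral_rpow_mul_exp_neg_mul_Ioi hα hs0, lintegral_rpow_mul_exp_neg_mul_Ioi hβ hs0,
          ← ENNReal.ofReal_mul (by positivity), one_div, inv_rpow hs0.le, inv_rpow hs0.le,
          ← rpow_neg hs0.le, ← rpow_neg hs0.le, neg_add, rpow_add hs0]
        ring_nf
    _ = _ := lintegral_Ioi_one_ofReal_mul_rpow_neg (by positivity) hαβ

theorem integral_integral_rpow_mul_rpow_mul_exp_neg_div_add (hα : 0 < α) (hβ : 0 < β)
    (hαβ : 1 < α + β) :
    ∫ x in Ioi 0, ∫ y in Ioi 0, x ^ (α - 1) * y ^ (β - 1) * exp (-(x + y)) / (x + y)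
      = Gamma α * Gamma β / (α + β - 1) := by
  have hnonneg : ∀ᵐ p ∂(volume.restrict (Ioi (0 : ℝ))).prod (volume.restrict (Ioi 0)),
      0 ≤ p.1 ^ (α - 1) * p.2 ^ (β - 1) * exp (-(p.1 + p.2)) / (p.1 + p.2) := by
    rw [Measure.prod_restrict, ae_restrict_iff' (measurableSet_Ioi.prod measurableSet_Ioi)]
    exact ae_of_all _ fun p ⟨(hx : 0 < p.1), (hy : 0 < p.2)⟩ => by positivity
  have hlint := lintegral_lintegral_rpow_mul_rpow_mul_exp_neg_div_add hα hβ hαβ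
  have hdenom : 0 < α + β - 1 := by linarith
  rw [integral_integral_eq_toReal_lintegral_lintegral
      (f := fun x y => x ^ (α - 1) * y ^ (β - 1) * exp (-(x + y)) / (x + y))
      (Measurable.div (by fun_prop) (by fun_prop)).aestronglyMeasurable hnonneg
      (hlint ▸ ENNReal.ofReal_ne_top), hlint, ENNReal.toReal_ofReal (by positivity)]

end

theorem bimoment_factorization (a b : ℝ) (ha : -1 < a) (hb : -1 < b)
    (hab : -1 < a + b) (i j : ℕ) :
    (∫ x in (0:ℝ)..1, x ^ ((i : ℝ) + (j : ℝ) + a + b))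
      = 1 / ((i : ℝ) + (j : ℝ) + a + b + 1)
    ∧ (∫ x in Ioi (0:ℝ), ∫ y in Ioi (0:ℝ),
        x ^ i * y ^ j * x ^ a * y ^ b * Real.exp (-(x + y)) / (x + y))
      = Real.Gamma (a + i + 1) *
          (∫ x in (0:ℝ)..1, x ^ ((i : ℝ) + (j : ℝ) + a + b)) *
          Real.Gamma (b + j + 1) := by
  have hi : (0 : ℝ) ≤ i := i.cast_nonneg
  have hj : (0 : ℝ) ≤ j := j.cast_nonneg
  have hM : ∫ x in (0:ℝ)..1, x ^ ((i : ℝ) + j + a + b) = 1 / ((i : ℝ) + j + a + b + 1) := by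
    rw [integral_rpow (Or.inl (by linarith)), one_rpow, zero_rpow (by linarith), sub_zero]
  refine ⟨hM, ?_⟩
  calc _ = ∫ x in Ioi 0, ∫ y in Ioi 0,
          x ^ (a + i + 1 - 1) * y ^ (b + j + 1 - 1) * exp (-(x + y)) / (x + y) := by
        refine setIntegral_congr_fun measurableSet_Ioi fun x (hx : 0 < x) => ?_
        refine setIntegral_congr_fun measurableSet_Ioi fun y (hy : 0 < y) => ?_
        simp only [add_sub_cancel_right, rpow_add hx, rpow_add hy, rpow_natCast]
        ring
    _ = Gamma (a + i + 1) * Gamma (b + j + 1) / (a + i + 1 + (b + j + 1) - 1) :=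
        integral_integral_rpow_mul_rpow_mul_exp_neg_div_add (by linarith) (by linarith)
          (by linarith)
    _ = _ := by
        rw [hM, show a + i + 1 + (b + j + 1) - 1 = (i : ℝ) + j + a + b + 1 by ring]
        ring
end

section
/- For real z > 0, a > −1 and real u with u < a + 1, the integral ∫₀^∞ x^{a−u} e^{−x}/(z+x) dx equals e^z Γ(a+1−u) z^{a−u} Γ(u−a, z), where Γ(s, z) = ∫_z^∞ t^{s−1} e^{−t} dt is the upper incomplete gamma function. -/
/-! Since `1 / (z + x) = e^(z + x) ∫₁^∞ e^(-(z + x) s) ds`, the integral equals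
`e^z ∫₀^∞ ∫₁^∞ x^p e^(-(z + x) s) ds dx` with `p = a - u`. The integrand is nonnegative and
integrable, so the order may be swapped; the inner `x`-integral is then the Gamma integral
`Γ(p + 1) s^(-(p + 1)) e^(-z s)`, and the substitution `t = z s` turns
`∫₁^∞ e^(-z s) s^(-(p + 1)) ds` into `z^p Γ(-p, z)`. -/

open MeasureTheory Set

/-- The upper incomplete gamma function `Γ(s, z) = ∫_z^∞ t^(s-1) e^(-t) dt`. -/
noncomputable def upperIncGamma (s z : ℝ) : ℝ :=
  ∫ t in Ioi z, t ^ (s - 1) * Real.exp (-t)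

open Real

lemma integrableOn_rpow_mul_exp_neg_div_add {z p : ℝ} (hz : 0 < z) (hp : -1 < p) :
    IntegrableOn (fun x ↦ x ^ p * exp (-x) / (z + x)) (Ioi 0) := by
  have hGamma := (GammaIntegral_convergent (s := p + 1) (by linarith)).const_mul z⁻¹
  rw [add_sub_cancel_right] at hGamma
  refine hGamma.mono' (Measurable.aestronglyMeasurable (by fun_prop)) ?_
  filter_upwards [ae_restrict_mem measurableSet_Ioi] with x (hx : 0 < x)
  rw [norm_of_nonneg (by positivity), div_eq_mul_inv, mul_comm z⁻¹, mul_comm (exp _)]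
  gcongr
  linarith

lemma integral_rpow_mul_exp_neg_add_mul_Ioi_one (p : ℝ) {z x : ℝ} (hzx : 0 < z + x) :
    ∫ s in Ioi (1 : ℝ), x ^ p * exp (-(z + x) * s) = exp (-z) * (x ^ p * exp (-x) / (z + x)) := by
  rw [integral_const_mul, integral_exp_mul_Ioi (neg_neg_iff_pos.mpr hzx), mul_one, neg_div_neg_eq,
    neg_add, exp_add]
  ring

lemma integral_rpow_mul_exp_neg_add_mul_Ioi_zero {p : ℝ} (hp : -1 < p) (z : ℝ) {s : ℝ}
    (hs : 0 < s) :
    ∫ x in Ioi (0 : ℝ), x ^ p * exp (-(z + x) * s)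
      = Gamma (p + 1) * (exp (-(z * s)) * s ^ (-(p + 1))) := by
  have hsplit : ∀ x : ℝ, x ^ p * exp (-(z + x) * s)
      = exp (-(z * s)) * (x ^ (p + 1 - 1) * exp (-(s * x))) := by
    intro x
    rw [add_sub_cancel_right, mul_left_comm, ← exp_add]
    ring_nf
  simp_rw [hsplit]
  rw [integral_const_mul, integral_rpow_mul_exp_neg_mul_Ioi (by linarith) hs, one_div,
    inv_rpow hs.le, ← rpow_neg hs.le]
  ring

lemma integrable_rpow_mul_exp_neg_add_mul {z p : ℝ} (hz : 0 < z) (hp : -1 < p) :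
    Integrable (Function.uncurry fun x s : ℝ ↦ x ^ p * exp (-(z + x) * s))
      ((volume.restrict (Ioi 0)).prod (volume.restrict (Ioi 1))) := by
  refine (integrable_prod_iff (by fun_prop)).mpr ⟨?_, ?_⟩
  · filter_upwards [ae_restrict_mem measurableSet_Ioi] with x (hx : 0 < x)
    exact (exp_neg_integrableOn_Ioi 1 (b := z + x) (by linarith)).const_mul (x ^ p)
  · refine ((integrableOn_rpow_mul_exp_neg_div_add hz hp).const_mul (exp (-z))).congr ?_
    filter_upwards [ae_restrict_mem measurableSet_Ioi] with x (hx : 0 < x)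
    simp only [Function.uncurry_apply_pair]
    rw [← integral_rpow_mul_exp_neg_add_mul_Ioi_one p (by linarith : 0 < z + x)]
    refine setIntegral_congr_fun measurableSet_Ioi fun s _ ↦ ?_
    exact (norm_of_nonneg (by positivity)).symm

lemma integral_exp_neg_mul_mul_rpow_Ioi_one (q : ℝ) {z : ℝ} (hz : 0 < z) :
    ∫ s in Ioi (1 : ℝ), exp (-(z * s)) * s ^ (-q) = z ^ (q - 1) * upperIncGamma (1 - q) z := by
  have hscale : ∀ s ∈ Ioi (1 : ℝ), exp (-(z * s)) * s ^ (-q)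
      = z ^ q * ((z * s) ^ (1 - q - 1) * exp (-(z * s))) := by
    intro s (hs : 1 < s)
    rw [sub_sub_cancel_left, mul_rpow hz.le (by linarith), rpow_neg hz.le, mul_assoc (z ^ q)⁻¹,
      mul_inv_cancel_left₀ (by positivity), mul_comm]
  rw [setIntegral_congr_fun measurableSet_Ioi hscale, integral_const_mul,
    integral_comp_mul_left_Ioi (fun t ↦ t ^ (1 - q - 1) * exp (-t)) 1 hz, mul_one, smul_eq_mul,
    upperIncGamma, ← mul_assoc, rpow_sub hz, rpow_one, div_eq_mul_inv]

theorem integral_rpow_mul_exp_neg_div_add {z p : ℝ} (hz : 0 < z) (hp : -1 < p) :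
    ∫ x in Ioi (0 : ℝ), x ^ p * exp (-x) / (z + x)
      = exp z * Gamma (p + 1) * z ^ p * upperIncGamma (-p) z := by
  calc ∫ x in Ioi (0 : ℝ), x ^ p * exp (-x) / (z + x)
      = exp z * ∫ x in Ioi (0 : ℝ), ∫ s in Ioi (1 : ℝ), x ^ p * exp (-(z + x) * s) := by
        rw [← integral_const_mul]
        refine setIntegral_congr_fun measurableSet_Ioi fun x (hx : 0 < x) ↦ ?_
        rw [integral_rpow_mul_exp_neg_add_mul_Ioi_one p (by linarith), ← mul_assoc, ← exp_add,
          add_neg_cancel, exp_zero, one_mul]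
    _ = exp z * ∫ s in Ioi (1 : ℝ), ∫ x in Ioi (0 : ℝ), x ^ p * exp (-(z + x) * s) := by
        rw [integral_integral_swap (integrable_rpow_mul_exp_neg_add_mul hz hp)]
    _ = exp z * (Gamma (p + 1) * ∫ s in Ioi (1 : ℝ), exp (-(z * s)) * s ^ (-(p + 1))) := by
        congr 1
        rw [← integral_const_mul]
        exact setIntegral_congr_fun measurableSet_Ioi fun (s : ℝ) (hs : 1 < s) ↦
          integral_rpow_mul_exp_neg_add_mul_Ioi_zero hp z (by linarith)
    _ = exp z * Gamma (p + 1) * z ^ p * upperIncGamma (-p) z := by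
        rw [integral_exp_neg_mul_mul_rpow_Ioi_one _ hz, add_sub_cancel_right,
          show (1 : ℝ) - (p + 1) = -p by ring]
        ring

theorem cauchy_transform_incgamma_general (z a u : ℝ) (hz : 0 < z)
    (hu : u < a + 1) :
    (∫ x in Ioi (0:ℝ), x ^ (a - u) * Real.exp (-x) / (z + x))
    = Real.exp z * Real.Gamma (a + 1 - u) * z ^ (a - u) * upperIncGamma (u - a) z := by
  rw [integral_rpow_mul_exp_neg_div_add hz (by linarith), neg_sub, sub_add_eq_add_sub]

theorem cauchy_transform_incgamma (z a u : ℝ) (hz : 0 < z) (ha : -1 < a)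
    (hu : u < a + 1) :
    (∫ x in Ioi (0:ℝ), x ^ (a - u) * Real.exp (-x) / (z + x))
    = Real.exp z * Real.Gamma (a + 1 - u) * z ^ (a - u) * upperIncGamma (u - a) z :=
  cauchy_transform_incgamma_general z a u hz hu
end

section
/- For α > −1 and real a with a > −1, a not a nonnegative integer lying in the pole set, and every natural number j ≥ 0 and n ≥ 1: the sum of residues of the meromorphic function f(u) = Γ(α+n+1−u)Γ(u)/(Γ(n+1+u)Γ(α+1−u)(u−a+j)) over all of its poles (namely u = 0, −1, ..., −n and u = a − j) equals zero. -/
/-!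
For non-real `u` the functional equation of `Γ` turns `resFun α a n j` into the rational function
`p(u) / ∏ₖ (u - vₖ)`, where `p(u) = (α + 1 - u)ₙ` (ascending Pochhammer symbol) has degree `n` and
the `n + 2` poles `vₖ`, namely `0, -1, …, -n, a - j`, are real and distinct. As the poles are real,
each limit in the hypotheses can be evaluated along non-real `u`, where no `Γ` factor is singular;
so the residue at `vₖ` is `p(vₖ) wₖ`, with `wₖ = ∏_{l ≠ k} (vₖ - vₗ)⁻¹` the Lagrange nodal weight.
Finally `∑ₖ p(vₖ) wₖ` is the coefficient of `u^{n+1}` in the Lagrange interpolant of `p` on these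
`n + 2` nodes; that interpolant is `p` itself, so the sum vanishes.
-/

open Complex Filter Topology Finset

/-- The meromorphic function appearing in the residue computation. -/
noncomputable def resFun (α a : ℝ) (n j : ℕ) (u : ℂ) : ℂ :=
  Complex.Gamma ((α : ℂ) + n + 1 - u) * Complex.Gamma u /
    (Complex.Gamma ((n : ℂ) + 1 + u) * Complex.Gamma ((α : ℂ) + 1 - u) *
      (u - (a : ℂ) + j))

open Polynomial Lagrange

lemma ascPochhammer_eval_eq_prod_range {R : Type*} [CommSemiring R] (n : ℕ) (r : R) :
    (ascPochhammer R n).eval r = ∏ k ∈ range n, (r + k) := by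
  induction n with
  | zero => simp
  | succ n ih => simp [ascPochhammer_succ_right, ih, prod_range_succ]

lemma Complex.ne_neg_natCast_of_im_ne_zero {z : ℂ} (hz : z.im ≠ 0) (m : ℕ) : z ≠ -m := by
  rintro rfl
  simp at hz

lemma Lagrange.sum_eval_mul_nodalWeight_eq_zero {F ι : Type*} [Field F] [DecidableEq ι]
    {s : Finset ι} {v : ι → F} (hvs : Set.InjOn v s) {p : F[X]}
    (hdeg : p.degree < ↑(#s - 1)) :
    ∑ i ∈ s, p.eval (v i) * nodalWeight s v i = 0 := by
  have hp : interpolate s v (fun i => p.eval (v i)) = p :=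
    (eq_interpolate hvs (hdeg.trans_le (by exact_mod_cast Nat.sub_le _ _))).symm
  have hcoeff : (interpolate s v (fun i => p.eval (v i))).coeff (#s - 1) =
      ∑ i ∈ s, p.eval (v i) * nodalWeight s v i := by
    rw [interpolate_apply, finsetSum_coeff]
    -- the leading coefficient of the `i`-th Lagrange basis polynomial is the nodal weight
    refine sum_congr rfl fun i hi => ?_
    have hmonic : (nodal (s.erase i) v).Monic := nodal_monic
    have hdeg : (nodal (s.erase i) v).natDegree = #s - 1 := by
      rw [natDegree_nodal, card_erase_of_mem hi]
    rw [basis_eq_prod_sub_inv_mul_nodal_div hi, ← nodal_erase_eq_nodal_div hi, ← mul_assoc,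
      ← C_mul, coeff_C_mul, ← hdeg, hmonic.coeff_natDegree, mul_one, mul_comm]
  rw [← hcoeff, hp, coeff_eq_zero_of_degree_lt hdeg]

lemma Complex.eq_of_tendsto_nhdsNE_of_eq_on_im_ne_zero {F G : ℂ → ℂ} {q L : ℂ} (hq : q.im = 0)
    (hFG : ∀ u : ℂ, u.im ≠ 0 → F u = G u) (hG : ContinuousAt G q)
    (hF : Tendsto F (𝓝[≠] q) (𝓝 L)) : L = G q := by
  set S : Set ℂ := im ⁻¹' {0}ᶜ
  have : NeBot (𝓝[S] q) := mem_closure_iff_nhdsWithin_neBot.mp <| by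
    rw [closure_preimage_im, closure_compl_singleton]; trivial
  have hSq : S ⊆ {q}ᶜ := fun u hu hqu => hu (by rw [Set.mem_singleton_iff.mp hqu, hq]; rfl)
  refine tendsto_nhds_unique (hF.mono_left (nhdsWithin_mono q hSq)) ?_
  exact (hG.tendsto.mono_left nhdsWithin_le_nhds).congr'
    (eventually_nhdsWithin_of_forall fun u hu => (hFG u hu).symm)

lemma Lagrange.eq_eval_mul_nodalWeight_of_tendsto {ι : Type*} [DecidableEq ι] {s : Finset ι}
    {v : ι → ℂ} (hvs : Set.InjOn v s) {i : ι} (hi : i ∈ s) (hvi : (v i).im = 0) (p : ℂ[X])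
    {F : ℂ → ℂ} (hF : ∀ u : ℂ, u.im ≠ 0 → F u = p.eval u / (nodal s v).eval u) {L : ℂ}
    (hL : Tendsto (fun u => (u - v i) * F u) (𝓝[≠] (v i)) (𝓝 L)) :
    L = p.eval (v i) * nodalWeight s v i := by
  have herase : (nodal (s.erase i) v).eval (v i) ≠ 0 :=
    eval_nodal_not_at_node fun k hk => (hvs.ne (mem_erase.mp hk).2 hi (mem_erase.mp hk).1).symm
  rw [nodalWeight_eq_eval_nodal_erase_inv, ← div_eq_mul_inv]
  set G : ℂ → ℂ := fun u => p.eval u / (nodal (s.erase i) v).eval u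
  refine eq_of_tendsto_nhdsNE_of_eq_on_im_ne_zero (G := G) hvi (fun u hu => ?_)
    (p.continuousAt.div (nodal (s.erase i) v).continuousAt herase) hL
  have hui : u - v i ≠ 0 := fun h => hu (by rw [sub_eq_zero.mp h, hvi])
  rw [hF u hu, nodal_eq_mul_nodal_erase hi, eval_mul]
  simp only [G, eval_sub, eval_X, eval_C]
  field_simp

noncomputable def resFunPole (a : ℝ) (j n k : ℕ) : ℂ := if k ≤ n then -k else a - j

noncomputable def resFunNumerator (α : ℝ) (n : ℕ) : ℂ[X] :=
  (ascPochhammer ℂ n).comp (C ((α : ℂ) + 1) - X)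

lemma im_resFunPole (a : ℝ) (j n k : ℕ) : (resFunPole a j n k).im = 0 := by
  unfold resFunPole; split_ifs <;> simp

lemma natDegree_resFunNumerator (α : ℝ) (n : ℕ) : (resFunNumerator α n).natDegree = n := by
  rw [resFunNumerator, natDegree_comp, ascPochhammer_natDegree, ← neg_sub, natDegree_neg,
    natDegree_X_sub_C, mul_one]

lemma ofReal_sub_natCast_ne_neg_natCast {a : ℝ} (ha : -1 < a) (ha2 : ∀ m : ℕ, a ≠ m) (j k : ℕ) :
    (a : ℂ) - j ≠ -k := by
  intro h
  have h' : a = (j : ℝ) - k := by exact_mod_cast (by linear_combination h : (a : ℂ) = j - k)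
  rcases le_or_gt k j with hkj | hjk
  · exact ha2 (j - k) (by rw [h', Nat.cast_sub hkj])
  · have : (j : ℝ) + 1 ≤ k := by exact_mod_cast hjk
    linarith

lemma resFunPole_injOn {a : ℝ} (ha : -1 < a) (ha2 : ∀ m : ℕ, a ≠ m) (j n : ℕ) :
    Set.InjOn (resFunPole a j n) (range (n + 2)) := by
  intro k hk l hl hkl
  simp only [coe_range, Set.mem_Iio] at hk hl
  unfold resFunPole at hkl
  split_ifs at hkl with hkn hln hln
  · exact_mod_cast neg_injective hkl
  · exact absurd hkl.symm (ofReal_sub_natCast_ne_neg_natCast ha ha2 j k)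
  · exact absurd hkl (ofReal_sub_natCast_ne_neg_natCast ha ha2 j l)
  · omega

lemma resFun_eq_of_im_ne_zero (α a : ℝ) (j n : ℕ) {u : ℂ} (hu : u.im ≠ 0) :
    resFun α a n j u =
      (resFunNumerator α n).eval u / (nodal (range (n + 2)) (resFunPole a j n)).eval u := by
  have hz := ne_neg_natCast_of_im_ne_zero (z := (α : ℂ) + 1 - u) (by simpa using hu)
  have hu' := ne_neg_natCast_of_im_ne_zero hu
  have hGz := Gamma_ne_zero hz
  have hGu := Gamma_ne_zero hu'
  have hnum : Gamma ((α : ℂ) + n + 1 - u) =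
      (ascPochhammer ℂ n).eval ((α : ℂ) + 1 - u) * Gamma ((α : ℂ) + 1 - u) := by
    rw [← Gamma_add_nat_div_Gamma_eq _ hz, div_mul_cancel₀ _ hGz]
    ring_nf
  have hden : Gamma ((n : ℂ) + 1 + u) = (ascPochhammer ℂ (n + 1)).eval u * Gamma u := by
    rw [← Gamma_add_nat_div_Gamma_eq u hu', div_mul_cancel₀ _ hGu]
    push_cast; ring_nf
  have hnodal : (nodal (range (n + 2)) (resFunPole a j n)).eval u =
      (ascPochhammer ℂ (n + 1)).eval u * (u - a + j) := by
    rw [eval_nodal, prod_range_succ, ascPochhammer_eval_eq_prod_range]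
    congr 1
    · refine prod_congr rfl fun k hk => ?_
      rw [resFunPole, if_pos (Nat.lt_succ_iff.mp (mem_range.mp hk))]; ring
    · rw [resFunPole, if_neg (by omega)]; ring
  rw [resFun, hnum, hden, hnodal, resFunNumerator, eval_comp]
  simp only [eval_sub, eval_C, eval_X]
  field_simp

theorem sum_of_residues_vanishes_general (α a : ℝ) (ha : -1 < a)
    (ha2 : ∀ m : ℕ, a ≠ (m : ℝ)) (j n : ℕ)
    (r : ℕ → ℂ) (ra : ℂ)
    (hr : ∀ k ≤ n, Tendsto (fun u : ℂ => (u + (k : ℂ)) * resFun α a n j u)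
      (𝓝[≠] (-(k : ℂ))) (𝓝 (r k)))
    (hra : Tendsto (fun u : ℂ => (u - ((a : ℂ) - (j : ℂ))) * resFun α a n j u)
      (𝓝[≠] ((a : ℂ) - (j : ℂ))) (𝓝 ra)) :
    (∑ k ∈ Finset.range (n + 1), r k) + ra = 0 := by
  set v := resFunPole a j n
  set p := resFunNumerator α n
  have hv : Set.InjOn v (range (n + 2)) := resFunPole_injOn ha ha2 j n
  have hresidue {k : ℕ} (hk : k < n + 2) {L : ℂ}
      (hL : Tendsto (fun u => (u - v k) * resFun α a n j u) (𝓝[≠] (v k)) (𝓝 L)) :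
      L = p.eval (v k) * nodalWeight (range (n + 2)) v k :=
    eq_eval_mul_nodalWeight_of_tendsto hv (mem_range.mpr hk) (im_resFunPole a j n k) p
      (fun _ hu => resFun_eq_of_im_ne_zero α a j n hu) hL
  have hpole (k : ℕ) (hk : k ∈ range (n + 1)) :
      r k = p.eval (v k) * nodalWeight (range (n + 2)) v k := by
    have hkn : k ≤ n := Nat.lt_succ_iff.mp (mem_range.mp hk)
    exact hresidue (by omega) (by simpa [v, resFunPole, hkn] using hr k hkn)
  have hlast := hresidue (k := n + 1) (by omega) (by simpa [v, resFunPole] using hra)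
  rw [sum_congr rfl hpole, hlast, ← sum_range_succ]
  refine sum_eval_mul_nodalWeight_eq_zero hv (degree_le_natDegree.trans_lt ?_)
  rw [natDegree_resFunNumerator, card_range]
  exact_mod_cast Nat.lt_succ_self n

theorem sum_of_residues_vanishes (α a : ℝ) (hα : -1 < α) (ha : -1 < a)
    (ha2 : ∀ m : ℕ, a ≠ (m : ℝ)) (j n : ℕ) (hn : 1 ≤ n)
    (r : ℕ → ℂ) (ra : ℂ)
    (hr : ∀ k ≤ n, Tendsto (fun u : ℂ => (u + (k : ℂ)) * resFun α a n j u)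
      (𝓝[≠] (-(k : ℂ))) (𝓝 (r k)))
    (hra : Tendsto (fun u : ℂ => (u - ((a : ℂ) - (j : ℂ))) * resFun α a n j u)
      (𝓝[≠] ((a : ℂ) - (j : ℂ))) (𝓝 ra)) :
    (∑ k ∈ Finset.range (n + 1), r k) + ra = 0 :=
  sum_of_residues_vanishes_general α a ha ha2 j n r ra hr hra
end

section
/- Let f and g be smooth functions on (0,∞) satisfying the third-order equations Δ(Δ+b)(Δ−a) f = −ζ f and Δ(Δ+a)(Δ−b) g = −ξ g respectively, where Δ = z d/dz is the Euler operator (in the respective variables ζ, ξ), and a, b are real parameters. Define the point-split bilinear concomitant B(f,g)(ζ,ξ) = f Δ²g − (Δf)(Δg) + g Δ²f + (b−a)(g Δf − f Δg) − ab f g, where Δ acts in ζ on f and in ξ on g. Then ∂/∂t [B(f(t·ζ), g(t·ξ))] = −(ζ + ξ) f(tζ) g(tξ) for t > 0. -/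
open Set Filter Topology

/-- The Euler operator `Δ f = z f'(z)`. -/
noncomputable def eulerOp (f : ℝ → ℝ) : ℝ → ℝ := fun z => z * deriv f z

/-- The third-order operator `Δ(Δ + b)(Δ - a)`. -/
noncomputable def L3 (a b : ℝ) (f : ℝ → ℝ) : ℝ → ℝ :=
  eulerOp (fun w =>
    eulerOp (fun w' => eulerOp f w' - a * f w') w
      + b * (eulerOp f w - a * f w))

/-- The point-split bilinear concomitant `B(f, g)(ζ, ξ)`. -/
noncomputable def concomitant (a b : ℝ) (f g : ℝ → ℝ) (ζ ξ : ℝ) : ℝ :=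
  f ζ * eulerOp (eulerOp g) ξ - eulerOp f ζ * eulerOp g ξ
    + g ξ * eulerOp (eulerOp f) ζ
    + (b - a) * (g ξ * eulerOp f ζ - f ζ * eulerOp g ξ)
    - a * b * (f ζ * g ξ)

lemma eulerOp_apply (h : ℝ → ℝ) (z : ℝ) : eulerOp h z = z * deriv h z := rfl

lemma eulerOp_contDiffOn {h : ℝ → ℝ} (hh : ContDiffOn ℝ (⊤ : ℕ∞) h (Ioi 0)) :
    ContDiffOn ℝ (⊤ : ℕ∞) (eulerOp h) (Ioi 0) :=
  contDiffOn_id.mul (hh.deriv_of_isOpen isOpen_Ioi (by simp))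

lemma diffAt {h : ℝ → ℝ} (hh : ContDiffOn ℝ (⊤ : ℕ∞) h (Ioi 0)) {z : ℝ} (hz : 0 < z) :
    DifferentiableAt ℝ h z :=
  (hh.differentiableOn (by simp)).differentiableAt (isOpen_Ioi.mem_nhds hz)

lemma deriv_scale {h : ℝ → ℝ} (hh : ContDiffOn ℝ (⊤ : ℕ∞) h (Ioi 0)) {s w : ℝ} (hs : 0 < s) (hw : 0 < w) :
    deriv (fun x => h (s * x)) w = s * deriv h (s * w) := by
  have hd : DifferentiableAt ℝ h (s * w) := diffAt hh (mul_pos hs hw)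
  have H := hd.hasDerivAt.comp w ((hasDerivAt_id w).const_mul s)
  simpa [Function.comp_def, mul_comm] using H.deriv

lemma eulerOp_scale {h : ℝ → ℝ} (hh : ContDiffOn ℝ (⊤ : ℕ∞) h (Ioi 0)) {s w : ℝ} (hs : 0 < s) (hw : 0 < w) :
    eulerOp (fun x => h (s * x)) w = eulerOp h (s * w) := by
  rw [eulerOp_apply, eulerOp_apply, deriv_scale hh hs hw]; ring

lemma eulerOp2_scale {h : ℝ → ℝ} (hh : ContDiffOn ℝ (⊤ : ℕ∞) h (Ioi 0)) {s w : ℝ} (hs : 0 < s) (hw : 0 < w) :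
    eulerOp (eulerOp (fun x => h (s * x))) w = eulerOp (eulerOp h) (s * w) := by
  have heq : eulerOp (fun x => h (s * x)) =ᶠ[𝓝 w] fun x => eulerOp h (s * x) := by
    filter_upwards [isOpen_Ioi.mem_nhds hw] with x hx
    exact eulerOp_scale hh hs hx
  rw [eulerOp_apply, heq.deriv_eq, deriv_scale (eulerOp_contDiffOn hh) hs hw, eulerOp_apply]
  ring

lemma hasDerivAt_scale {h : ℝ → ℝ} (hh : ContDiffOn ℝ (⊤ : ℕ∞) h (Ioi 0)) {ζ t : ℝ} (hζ : 0 < ζ) (ht : 0 < t) :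
    HasDerivAt (fun s => h (s * ζ)) (eulerOp h (t * ζ) / t) t := by
  have hd : DifferentiableAt ℝ h (t * ζ) := diffAt hh (mul_pos ht hζ)
  have H := hd.hasDerivAt.comp t ((hasDerivAt_id t).mul_const ζ)
  have : eulerOp h (t * ζ) / t = deriv h (t * ζ) * (1 * ζ) := by
    rw [eulerOp_apply]; field_simp
  rw [this]
  exact H

lemma eulerOp_sub_smul {F G : ℝ → ℝ} {c z : ℝ} (hF : DifferentiableAt ℝ F z)
    (hG : DifferentiableAt ℝ G z) :
    eulerOp (fun w => F w - c * G w) z = eulerOp F z - c * eulerOp G z := by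
  rw [eulerOp_apply, eulerOp_apply, eulerOp_apply,
    deriv_fun_sub hF (hG.const_mul c), deriv_const_mul c hG]
  ring

lemma L3_expand (a b : ℝ) {h : ℝ → ℝ} (hh : ContDiffOn ℝ (⊤ : ℕ∞) h (Ioi 0)) {z : ℝ} (hz : 0 < z) :
    L3 a b h z = eulerOp (eulerOp (eulerOp h)) z + (b - a) * eulerOp (eulerOp h) z
      - a * b * eulerOp h z := by
  have hu1 := eulerOp_contDiffOn hh
  have hu2 := eulerOp_contDiffOn hu1
  have heq : (fun w => eulerOp (fun w' => eulerOp h w' - a * h w') w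
        + b * (eulerOp h w - a * h w))
      =ᶠ[𝓝 z] fun w => eulerOp (eulerOp h) w + (b - a) * eulerOp h w - a * b * h w := by
    filter_upwards [isOpen_Ioi.mem_nhds hz] with w hw
    rw [eulerOp_sub_smul (diffAt hu1 hw) (diffAt hh hw)]
    ring
  have hQ : deriv (fun w => eulerOp (eulerOp h) w + (b - a) * eulerOp h w - a * b * h w) z
      = deriv (eulerOp (eulerOp h)) z + (b - a) * deriv (eulerOp h) z - a * b * deriv h z := by
    erw [deriv_fun_sub (((diffAt hu2 hz).add ((diffAt hu1 hz).const_mul _))) ((diffAt hh hz).const_mul _),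
      deriv_fun_add (diffAt hu2 hz) ((diffAt hu1 hz).const_mul _),
      deriv_const_mul _ (diffAt hu1 hz), deriv_const_mul _ (diffAt hh hz)]
  show z * deriv _ z = _
  rw [heq.deriv_eq, hQ, eulerOp_apply (eulerOp (eulerOp h)), eulerOp_apply (eulerOp h),
    eulerOp_apply h]
  ring

theorem concomitant_deriv_minus (a b ζ ξ : ℝ) (hζ : 0 < ζ) (hξ : 0 < ξ)
    (f g : ℝ → ℝ)
    (hf : ContDiffOn ℝ (⊤ : ℕ∞) f (Ioi 0)) (hg : ContDiffOn ℝ (⊤ : ℕ∞) g (Ioi 0))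
    (hfe : ∀ z ∈ Ioi (0:ℝ), L3 a b f z = -z * f z)
    (hge : ∀ z ∈ Ioi (0:ℝ), L3 b a g z = -z * g z)
    (t : ℝ) (ht : 0 < t) :
    deriv (fun s => concomitant a b (fun w => f (s * w)) (fun w => g (s * w)) ζ ξ) t
      = -(ζ + ξ) * f (t * ζ) * g (t * ξ) := by
  have hu1 := eulerOp_contDiffOn hf
  have hu2 := eulerOp_contDiffOn hu1
  have hv1 := eulerOp_contDiffOn hg
  have hv2 := eulerOp_contDiffOn hv1
  have key : (fun s => concomitant a b (fun w => f (s * w)) (fun w => g (s * w)) ζ ξ)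
      =ᶠ[𝓝 t] fun s => f (s * ζ) * eulerOp (eulerOp g) (s * ξ)
        - eulerOp f (s * ζ) * eulerOp g (s * ξ)
        + g (s * ξ) * eulerOp (eulerOp f) (s * ζ)
        + (b - a) * (g (s * ξ) * eulerOp f (s * ζ) - f (s * ζ) * eulerOp g (s * ξ))
        - a * b * (f (s * ζ) * g (s * ξ)) := by
    filter_upwards [isOpen_Ioi.mem_nhds ht] with s hs
    unfold concomitant
    rw [eulerOp_scale hf hs hζ, eulerOp_scale hg hs hξ, eulerOp2_scale hf hs hζ,
      eulerOp2_scale hg hs hξ]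
  rw [key.deriv_eq]
  have Hf0 := hasDerivAt_scale hf hζ ht
  have Hf1 := hasDerivAt_scale hu1 hζ ht
  have Hf2 := hasDerivAt_scale hu2 hζ ht
  have Hg0 := hasDerivAt_scale hg hξ ht
  have Hg1 := hasDerivAt_scale hv1 hξ ht
  have Hg2 := hasDerivAt_scale hv2 hξ ht
  have HD := (((((Hf0.mul Hg2).sub (Hf1.mul Hg1)).add (Hg0.mul Hf2)).add
      (((Hg0.mul Hf1).sub (Hf0.mul Hg1)).const_mul (b - a))).sub
      ((Hf0.mul Hg0).const_mul (a * b)))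
  erw [HD.deriv]
  have eqf : eulerOp (eulerOp (eulerOp f)) (t * ζ) + (b - a) * eulerOp (eulerOp f) (t * ζ)
      - a * b * eulerOp f (t * ζ) = -(t * ζ) * f (t * ζ) := by
    rw [← L3_expand a b hf (mul_pos ht hζ)]
    exact hfe _ (mul_pos ht hζ)
  have eqg : eulerOp (eulerOp (eulerOp g)) (t * ξ) + (a - b) * eulerOp (eulerOp g) (t * ξ)
      - b * a * eulerOp g (t * ξ) = -(t * ξ) * g (t * ξ) := by
    rw [← L3_expand b a hg (mul_pos ht hξ)]
    exact hge _ (mul_pos ht hξ)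
  have htne : t ≠ 0 := ht.ne'
  field_simp
  linear_combination (g (t * ξ)) * eqf + (f (t * ζ)) * eqg
end
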